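/- arXiv:2405.20123 — 8 statements merged into one kernel-verified Lean document; each statement's English description precedes it below -/
import Mathlib

section
/- In the Location–Time–Request digraph G_LTR, every directed path from the source to the sink has the property that each delivery arc for request r is preceded, among the arcs of the path, most recently (among pickup/delivery arcs) by a pickup arc for the same request r; hence on every source–sink path the services are paired and ordered: pickup arcs of request r and delivery arcs of request r alternate, starting with a pickup of r. -/
/-- Nodes of the Location–Time–Request digraph `G_LTR`: a source, a sink, and a
node `n^r_{l,i}` for every location `l`, time instant `i` and superscript
`r ∈ R ∪ {∘}` (encoded as `Option R`, with `none = ∘`, the empty truck). -/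
inductive LTRNode (L R : Type) where
  | source : LTRNode L R
  | sink : LTRNode L R
  | node (l : L) (i : ℕ) (r : Option R) : LTRNode L R

namespace LTRNode

variable {L R : Type} [DecidableEq R]

/-- A pickup arc of request `r` goes from a `∘`-node to an `r`-node. -/
def isPickupOf (r : R) : LTRNode L R × LTRNode L R → Bool
  | (node _ _ none, node _ _ (some r')) => decide (r' = r)
  | _ => false

/-- A delivery arc of request `r` goes from an `r`-node to a `∘`-node. -/
def isDeliveryOf (r : R) : LTRNode L R × LTRNode L R → Bool
  | (node _ _ (some r'), node _ _ none) => decide (r' = r)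
  | _ => false

/-- A service (pickup or delivery) arc of any request. -/
def isService : LTRNode L R × LTRNode L R → Bool
  | (node _ _ none, node _ _ (some _)) => true
  | (node _ _ (some _), node _ _ none) => true
  | _ => false

end LTRNode

namespace Stmt2Aux

open LTRNode

variable {L R : Type} [DecidableEq R]

/-- The superscript ("state") of a node; source/sink count as `∘`. -/
def sup : LTRNode L R → Option R
  | .node _ _ s => s
  | _ => none

/-- Indicator that the current superscript is `r`. -/
def phi (r : R) (n : LTRNode L R) : ℕ := if sup n = some r then 1 else 0

lemma phi_le_one (r : R) (n : LTRNode L R) : phi r n ≤ 1 := by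
  unfold phi; split <;> simp

/-- Endpoint of a walk (list of arcs) starting at `a`. -/
def endOf (a : LTRNode L R) : List (LTRNode L R × LTRNode L R) → LTRNode L R
  | [] => a
  | p :: t => endOf p.2 t

/-- A list of arcs forms a walk from `a` with all arcs in `E`. -/
def good (E : LTRNode L R → LTRNode L R → Prop) (a : LTRNode L R) :
    List (LTRNode L R × LTRNode L R) → Prop
  | [] => True
  | p :: t => p.1 = a ∧ E p.1 p.2 ∧ good E p.2 t

lemma endOf_append (a : LTRNode L R) (u v : List (LTRNode L R × LTRNode L R)) :
    endOf a (u ++ v) = endOf (endOf a u) v := by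
  induction u generalizing a with
  | nil => rfl
  | cons p t ih => simp [endOf, ih]

lemma good_append {E : LTRNode L R → LTRNode L R → Prop} {a : LTRNode L R}
    {u v : List (LTRNode L R × LTRNode L R)} (h : good E a (u ++ v)) :
    good E a u ∧ good E (endOf a u) v := by
  induction u generalizing a with
  | nil => exact ⟨trivial, h⟩
  | cons p t ih =>
    obtain ⟨h1, h2, h3⟩ := h
    obtain ⟨h4, h5⟩ := ih h3
    exact ⟨⟨h1, h2, h4⟩, h5⟩

section

variable {E : LTRNode L R → LTRNode L R → Prop}
variable (hE : ∀ a b : LTRNode L R, E a b →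
      (a = .source ∧ ∃ l : L, b = .node l 0 none) ∨
      (∃ l : L, ∃ T : ℕ, a = .node l T none ∧ b = .sink) ∨
      (∃ (l1 l2 : L) (i j : ℕ) (s : Option R), a = .node l1 i s ∧ b = .node l2 j s) ∨
      (∃ (l : L) (i j : ℕ) (r : R), a = .node l i none ∧ b = .node l j (some r)) ∨
      (∃ (l : L) (i j : ℕ) (r : R), a = .node l i (some r) ∧ b = .node l j none))

include hE

/-- Local balance across a single arc. -/
lemma step (r : R) {a b : LTRNode L R} (hab : E a b) :
    (if isPickupOf r (a, b) then 1 else 0) + phi r a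
      = (if isDeliveryOf r (a, b) then 1 else 0) + phi r b := by
  rcases hE a b hab with ⟨ha, l, hb⟩ | ⟨l, T, ha, hb⟩ |
      ⟨l1, l2, i, j, s, ha, hb⟩ | ⟨l, i, j, r', ha, hb⟩ | ⟨l, i, j, r', ha, hb⟩ <;>
    subst ha <;> subst hb
  · simp [isPickupOf, isDeliveryOf, phi, sup]
  · simp [isPickupOf, isDeliveryOf, phi, sup]
  · cases s <;> simp [isPickupOf, isDeliveryOf, phi, sup]
  · by_cases h : r' = r <;> simp [isPickupOf, isDeliveryOf, phi, sup, h]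
  · by_cases h : r' = r <;> simp [isPickupOf, isDeliveryOf, phi, sup, h]

/-- Global balance along a walk. -/
lemma count_eq (r : R) :
    ∀ (l : List (LTRNode L R × LTRNode L R)) (a : LTRNode L R), good E a l →
      l.countP (isPickupOf r) + phi r a = l.countP (isDeliveryOf r) + phi r (endOf a l) := by
  intro l
  induction l with
  | nil => intro a _; rfl
  | cons p t ih =>
    intro a hg
    obtain ⟨h1, h2, h3⟩ := hg
    have hstep := step hE r h2
    have hih := ih p.2 h3
    simp only [List.countP_cons, endOf]
    have hp : (p.1, p.2) = p := rfl
    rw [hp] at hstep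
    rw [h1] at hstep
    omega

/-- A non-service arc preserves the superscript. -/
lemma sup_eq_of_not_service {a b : LTRNode L R} (hab : E a b)
    (h : isService (a, b) = false) : sup b = sup a := by
  rcases hE a b hab with ⟨ha, l, hb⟩ | ⟨l, T, ha, hb⟩ |
      ⟨l1, l2, i, j, s, ha, hb⟩ | ⟨l, i, j, r', ha, hb⟩ | ⟨l, i, j, r', ha, hb⟩ <;>
    subst ha <;> subst hb <;> simp_all [isService, sup]

/-- A service arc into an `r`-node is a pickup of `r`. -/
lemma pickup_of_service {r : R} {a b : LTRNode L R} (hab : E a b)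
    (hs : isService (a, b) = true) (hb : sup b = some r) :
    isPickupOf r (a, b) = true := by
  rcases hE a b hab with ⟨ha, l, hb'⟩ | ⟨l, T, ha, hb'⟩ |
      ⟨l1, l2, i, j, s, ha, hb'⟩ | ⟨l, i, j, r', ha, hb'⟩ | ⟨l, i, j, r', ha, hb'⟩ <;>
    subst ha <;> subst hb'
  · simp [isService] at hs
  · simp [isService] at hs
  · cases s <;> simp [isService] at hs
  · simp [sup] at hb
    simp [isPickupOf, hb]
  · simp [sup] at hb

lemma sup_endOf_eq :
    ∀ (l : List (LTRNode L R × LTRNode L R)) (a : LTRNode L R), good E a l →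
      (∀ x ∈ l, isService x = false) → sup (endOf a l) = sup a := by
  intro l
  induction l with
  | nil => intro a _ _; rfl
  | cons p t ih =>
    intro a hg hns
    obtain ⟨h1, h2, h3⟩ := hg
    have := sup_eq_of_not_service hE h2 (by have := hns p List.mem_cons_self; simpa using this)
    simp only [endOf]
    rw [ih p.2 h3 (fun x hx => hns x (List.mem_cons_of_mem _ hx))]
    rw [this, h1]

end

/-- `Chain'` on a node list gives a walk on the zipped arc list. -/
lemma good_zip {E : LTRNode L R → LTRNode L R → Prop} :
    ∀ (t : List (LTRNode L R)) (a : LTRNode L R), List.Chain' E (a :: t) →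
      good E a ((a :: t).zip t) := by
  intro t
  induction t with
  | nil => intro a _; trivial
  | cons b t' ih =>
    intro a hc
    replace hc := List.isChain_cons_cons.mp hc
    exact ⟨rfl, hc.1, ih b hc.2⟩

lemma exists_last {α : Type*} (P : α → Bool) :
    ∀ l : List α, (∃ x ∈ l, P x = true) →
      ∃ la q lb, l = la ++ q :: lb ∧ P q = true ∧ ∀ x ∈ lb, P x = false := by
  intro l
  induction l with
  | nil => simp
  | cons h t ih =>
    intro hex
    by_cases ht : ∃ x ∈ t, P x = true
    · obtain ⟨la, q, lb, h1, h2, h3⟩ := ih ht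
      exact ⟨h :: la, q, lb, by rw [h1]; rfl, h2, h3⟩
    · have hPh : P h = true := by
        rcases hex with ⟨x, hx, hPx⟩
        rcases List.mem_cons.mp hx with rfl | hx
        · exact hPx
        · exact absurd ⟨x, hx, hPx⟩ ht
      refine ⟨[], h, t, rfl, hPh, ?_⟩
      intro x hx
      by_contra hc
      exact ht ⟨x, hx, by simpa using hc⟩

lemma delivery_sup {r : R} {p : LTRNode L R × LTRNode L R}
    (h : isDeliveryOf r p = true) : sup p.1 = some r := by
  obtain ⟨x, y⟩ := p
  cases x <;> cases y <;> simp [isDeliveryOf] at h <;> try simp [sup]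
  all_goals
    first
    | (rename_i s _ _ s'; cases s <;> cases s' <;> simp_all [isDeliveryOf, sup])
    | (rename_i s; cases s <;> simp_all [isDeliveryOf, sup])

end Stmt2Aux

/-- In `G_LTR` — where rest/trip arcs preserve the superscript,
pickup arcs of request `r` go `∘ → r`, delivery arcs of `r` go `r → ∘`, source
arcs enter `∘`-nodes at time `0` and sink arcs leave `∘`-nodes at the final
time `T` — every directed source–sink path has, for every request `r`: the
pickup and delivery arcs of `r` alternate starting with a pickup of `r`
(in every prefix, `#deliveries of r ≤ #pickups of r ≤ #deliveries of r + 1`),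
and each delivery arc of `r` is most recently preceded, among all
pickup/delivery arcs of the path, by a pickup arc of the same request `r`. -/
theorem stmt_2 {L R : Type} [DecidableEq R] (T : ℕ)
    (E : LTRNode L R → LTRNode L R → Prop)
    (hE : ∀ a b : LTRNode L R, E a b →
      (a = .source ∧ ∃ l : L, b = .node l 0 none) ∨
      (∃ l : L, a = .node l T none ∧ b = .sink) ∨
      (∃ (l1 l2 : L) (i j : ℕ) (s : Option R), a = .node l1 i s ∧ b = .node l2 j s) ∨
      (∃ (l : L) (i j : ℕ) (r : R), a = .node l i none ∧ b = .node l j (some r)) ∨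
      (∃ (l : L) (i j : ℕ) (r : R), a = .node l i (some r) ∧ b = .node l j none))
    (ns : List (LTRNode L R))
    (hchain : ns.Chain' E)
    (hhead : ns.head? = some .source)
    (hlast : ns.getLast? = some .sink) :
    ∀ r : R,
      (∀ l₁ l₂ : List (LTRNode L R × LTRNode L R), ns.zip ns.tail = l₁ ++ l₂ →
        l₁.countP (LTRNode.isDeliveryOf r) ≤ l₁.countP (LTRNode.isPickupOf r) ∧
        l₁.countP (LTRNode.isPickupOf r) ≤ l₁.countP (LTRNode.isDeliveryOf r) + 1) ∧
      (∀ (l₁ : List (LTRNode L R × LTRNode L R)) (p : LTRNode L R × LTRNode L R)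
          (l₂ : List (LTRNode L R × LTRNode L R)),
        ns.zip ns.tail = l₁ ++ p :: l₂ → LTRNode.isDeliveryOf r p = true →
        ∃ (la : List (LTRNode L R × LTRNode L R)) (q : LTRNode L R × LTRNode L R)
          (lb : List (LTRNode L R × LTRNode L R)),
          l₁ = la ++ q :: lb ∧ LTRNode.isPickupOf r q = true ∧
          ∀ x ∈ lb, LTRNode.isService x = false) := by
  have hE' : ∀ a b : LTRNode L R, E a b →
      (a = .source ∧ ∃ l : L, b = .node l 0 none) ∨
      (∃ l : L, ∃ T' : ℕ, a = .node l T' none ∧ b = .sink) ∨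
      (∃ (l1 l2 : L) (i j : ℕ) (s : Option R), a = .node l1 i s ∧ b = .node l2 j s) ∨
      (∃ (l : L) (i j : ℕ) (r : R), a = .node l i none ∧ b = .node l j (some r)) ∨
      (∃ (l : L) (i j : ℕ) (r : R), a = .node l i (some r) ∧ b = .node l j none) := by
    intro a b hab
    rcases hE a b hab with h | ⟨l, h1, h2⟩ | h | h | h
    · exact Or.inl h
    · exact Or.inr (Or.inl ⟨l, T, h1, h2⟩)
    · exact Or.inr (Or.inr (Or.inl h))
    · exact Or.inr (Or.inr (Or.inr (Or.inl h)))
    · exact Or.inr (Or.inr (Or.inr (Or.inr h)))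
  obtain ⟨t, rfl⟩ : ∃ t, ns = LTRNode.source :: t := by
    cases ns with
    | nil => simp at hhead
    | cons a t =>
      simp only [List.head?_cons, Option.some.injEq] at hhead
      exact ⟨t, by rw [hhead]⟩
  have hgood : Stmt2Aux.good E LTRNode.source ((LTRNode.source :: t).zip t) :=
    Stmt2Aux.good_zip t _ hchain
  intro r
  constructor
  · intro l₁ l₂ hsplit
    simp only [List.tail_cons] at hsplit
    rw [hsplit] at hgood
    obtain ⟨hg1, -⟩ := Stmt2Aux.good_append hgood
    have hc := Stmt2Aux.count_eq hE' r l₁ _ hg1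
    have h0 : Stmt2Aux.phi r (LTRNode.source : LTRNode L R) = 0 := rfl
    have h1 := Stmt2Aux.phi_le_one r (Stmt2Aux.endOf (LTRNode.source : LTRNode L R) l₁)
    omega
  · intro l₁ p l₂ hsplit hdel
    simp only [List.tail_cons] at hsplit
    rw [hsplit] at hgood
    obtain ⟨hg1, hg2⟩ := Stmt2Aux.good_append hgood
    obtain ⟨hp1, -, -⟩ := hg2
    have hsup : Stmt2Aux.sup (Stmt2Aux.endOf (LTRNode.source : LTRNode L R) l₁) = some r := by
      rw [← hp1]; exact Stmt2Aux.delivery_sup hdel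
    have hex : ∃ x ∈ l₁, LTRNode.isService x = true := by
      by_contra hno
      push_neg at hno
      have hall : ∀ x ∈ l₁, LTRNode.isService x = false := by
        intro x hx
        have := hno x hx
        simpa using this
      have := Stmt2Aux.sup_endOf_eq hE' l₁ _ hg1 hall
      rw [hsup] at this
      simp [Stmt2Aux.sup] at this
    obtain ⟨la, q, lb, hdec, hqs, hlb⟩ := Stmt2Aux.exists_last _ l₁ hex
    refine ⟨la, q, lb, hdec, ?_, hlb⟩
    rw [hdec] at hg1
    obtain ⟨-, hq1, hq2, hglb⟩ : _ ∧ q.1 = _ ∧ E q.1 q.2 ∧ Stmt2Aux.good E q.2 lb :=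
      Stmt2Aux.good_append hg1
    have hend : Stmt2Aux.endOf (LTRNode.source : LTRNode L R) l₁
        = Stmt2Aux.endOf q.2 lb := by
      rw [hdec, Stmt2Aux.endOf_append]
      rfl
    have hsupq : Stmt2Aux.sup q.2 = some r := by
      have := Stmt2Aux.sup_endOf_eq hE' lb q.2 hglb hlb
      rw [← this, ← hend, hsup]
    have := Stmt2Aux.pickup_of_service hE' hq2 (by simpa using hqs) hsupq
    simpa using this
end

section
/- The precedence inequalities PREC imply the original precedence constraints: if a 0/1 vector X on the arcs of G_LT satisfies, for every request r and every delivery time threshold i, that the total (over all trucks) number of selected pickup arcs of r completing by time i − len(l^P_r, l^D_r) is at least the total number of selected delivery arcs of r starting by time i, and X additionally has no repeated services (at most one pickup arc of each r selected overall), then for every request r and every selected delivery arc e of r there exists a selected pickup arc of r completing no later than the start time of e. -/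
/-! Evaluate PREC at the threshold `i = 𝓘(e)` of a selected delivery arc `e`: the left side
counts `e` itself, so it is positive, hence so is the right side, which produces a selected
pickup arc `e'` with `𝓘'(e') + len ≤ 𝓘(e)`; since `len ≥ 0` this gives `𝓘'(e') ≤ 𝓘(e)`. -/

theorem Finset.sum_card_filter_pos_iff {ι α : Type*} [Fintype ι] (s : Finset α)
    (p : ι → α → Prop) [∀ i, DecidablePred (p i)] :
    0 < ∑ i, (s.filter (p i)).card ↔ ∃ i, ∃ a ∈ s, p i a := by
  simp only [Finset.sum_pos_iff, Finset.card_pos, Finset.filter_nonempty_iff, Finset.mem_univ,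
    true_and]

theorem stmt_5_general {V A R : Type} [Fintype V]
    (EP ED : R → Finset A) (start fin : A → ℕ) (lenr : R → ℕ)
    (X : V → A → Bool)
    (hPREC : ∀ (r : R) (i : ℕ),
      ∑ v : V, ((ED r).filter (fun e => X v e = true ∧ start e ≤ i)).card
        ≤ ∑ v : V, ((EP r).filter (fun e => X v e = true ∧ fin e + lenr r ≤ i)).card) :
    ∀ (r : R) (v : V) (e : A), e ∈ ED r → X v e = true →
      ∃ (v' : V) (e' : A), e' ∈ EP r ∧ X v' e' = true ∧ fin e' ≤ start e := by
  intro r v e he hXe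
  have hdelivered : 0 < ∑ v : V,
      ((ED r).filter (fun e' => X v e' = true ∧ start e' ≤ start e)).card :=
    (Finset.sum_card_filter_pos_iff _ _).2 ⟨v, e, he, hXe, le_rfl⟩
  obtain ⟨v', e', he', hXe', hfin⟩ :=
    (Finset.sum_card_filter_pos_iff _ _).1 (hdelivered.trans_le (hPREC r (start e)))
  exact ⟨v', e', he', hXe', le_of_add_le_left hfin⟩

/-- The precedence inequalities PREC imply the original
precedence constraints.  Here `A` is the arc set of `G_LT`, `EP r`/`ED r` are
the pickup/delivery arcs of request `r`, `start e = 𝓘(e)` and `fin e = 𝓘'(e)`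
are the start and end times of arc `e`, `lenr r = len(l^P_r, l^D_r)` is the
travel time from the pickup to the delivery location of `r`, and
`X : V → A → Bool` is a 0/1 vector over trucks and arcs.

If for every request `r` and every delivery time threshold `i` the total (over
all trucks) number of selected pickup arcs of `r` completing by time
`i − lenr r` (i.e. with `fin e + lenr r ≤ i`) is at least the total number of
selected delivery arcs of `r` starting by time `i`, and `X` has no repeated
services, then for every request `r` and every selected delivery arc `e` of
`r` there is a selected pickup arc of `r` completing no later than the start
time of `e`. -/
theorem stmt_5 {V A R : Type} [Fintype V] [DecidableEq A]
    (EP ED : R → Finset A) (start fin : A → ℕ) (lenr : R → ℕ)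
    (X : V → A → Bool)
    (hPREC : ∀ (r : R) (i : ℕ),
      ∑ v : V, ((ED r).filter (fun e => X v e = true ∧ start e ≤ i)).card
        ≤ ∑ v : V, ((EP r).filter (fun e => X v e = true ∧ fin e + lenr r ≤ i)).card)
    (hnorep : ∀ r : R,
      ∑ v : V, ((EP r).filter (fun e => X v e = true)).card ≤ 1 ∧
      ∑ v : V, ((ED r).filter (fun e => X v e = true)).card ≤ 1) :
    ∀ (r : R) (v : V) (e : A), e ∈ ED r → X v e = true →
      ∃ (v' : V) (e' : A), e' ∈ EP r ∧ X v' e' = true ∧ fin e' ≤ start e :=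
  stmt_5_general EP ED start fin lenr X hPREC
end

section
/- The pickup-and-delivery trip inequality PD₁ is valid: for any truck route, represented as a directed source–sink path P in G_LT in which for every request r the numbers of pickup arcs of r and delivery arcs of r in P are equal and each pickup of r precedes the corresponding delivery, and for any location l, the number of trip arcs of P departing from l is at least the number of pickup arcs of P at location l whose request's delivery location differs from l. -/
/-- Arc labels of a truck route in the Location–Time digraph `G_LT`:
rest arcs, trip arcs, pickup arcs and delivery arcs, each carrying its
location(s) and start/end times. -/
inductive TArc (L R : Type) where
  | rest (l : L) (i : ℕ) : TArc L R
  | trip (l1 l2 : L) (i j : ℕ) : TArc L R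
  | pickup (r : R) (l : L) (i j : ℕ) : TArc L R
  | delivery (r : R) (l : L) (i j : ℕ) : TArc L R

namespace TArc

variable {L R : Type}

def startLoc : TArc L R → L
  | rest l _ => l
  | trip l1 _ _ _ => l1
  | pickup _ l _ _ => l
  | delivery _ l _ _ => l

def endLoc : TArc L R → L
  | rest l _ => l
  | trip _ l2 _ _ => l2
  | pickup _ l _ _ => l
  | delivery _ l _ _ => l

def startTime : TArc L R → ℕ
  | rest _ i => i
  | trip _ _ i _ => i
  | pickup _ _ i _ => i
  | delivery _ _ i _ => i

def endTime : TArc L R → ℕ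
  | rest _ i => i + 1
  | trip _ _ _ j => j
  | pickup _ _ _ j => j
  | delivery _ _ _ j => j

def isPickup : TArc L R → Bool
  | pickup _ _ _ _ => true
  | _ => false

def isDelivery : TArc L R → Bool
  | delivery _ _ _ _ => true
  | _ => false

def isPickupOf [DecidableEq R] (r : R) : TArc L R → Bool
  | pickup r' _ _ _ => decide (r' = r)
  | _ => false

def isDeliveryOf [DecidableEq R] (r : R) : TArc L R → Bool
  | delivery r' _ _ _ => decide (r' = r)
  | _ => false

def isTripFrom [DecidableEq L] (l : L) : TArc L R → Bool
  | trip l1 _ _ _ => decide (l1 = l)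
  | _ => false

end TArc

/-- A valid truck route in `G_LT`, represented as the list of its arc labels:
consecutive arcs are linked in space and time, time never decreases along an
arc, pickups of request `r` occur at `lp r` and deliveries at `ld r`, services
are paired (`#pickups of r = #deliveries of r`), ordered (in every prefix the
deliveries of `r` never outnumber the pickups of `r`), not repeated (at most
one pickup of each request), and the truck carries at most one request at a
time (in every prefix, `#pickups ≤ #deliveries + 1`). -/
def ValidRoute {L R : Type} [DecidableEq L] [DecidableEq R]
    (lp ld : R → L) (P : List (TArc L R)) : Prop :=
  P.Chain' (fun a b => a.endLoc = b.startLoc ∧ a.endTime = b.startTime) ∧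
  (∀ a ∈ P, a.startTime ≤ a.endTime) ∧
  (∀ (r : R) (l : L) (i j : ℕ), TArc.pickup r l i j ∈ P → l = lp r) ∧
  (∀ (r : R) (l : L) (i j : ℕ), TArc.delivery r l i j ∈ P → l = ld r) ∧
  (∀ r : R, P.countP (TArc.isPickupOf r) = P.countP (TArc.isDeliveryOf r)) ∧
  (∀ (r : R) (l₁ l₂ : List (TArc L R)), P = l₁ ++ l₂ →
    l₁.countP (TArc.isDeliveryOf r) ≤ l₁.countP (TArc.isPickupOf r)) ∧
  (∀ r : R, P.countP (TArc.isPickupOf r) ≤ 1) ∧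
  (∀ l₁ l₂ : List (TArc L R), P = l₁ ++ l₂ →
    l₁.countP TArc.isPickup ≤ l₁.countP TArc.isDelivery + 1)


namespace PD1Aux

variable {L R : Type}

/-- trip-arc test -/
def isTripA : TArc L R → Bool
  | TArc.trip _ _ _ _ => true
  | _ => false

lemma nontrip_loc (a : TArc L R) (h : isTripA a = false) : a.endLoc = a.startLoc := by
  cases a <;> simp [isTripA] at h ⊢ <;> rfl

/-- a chain that crosses a block `C` of non-trip arcs keeps its location -/
lemma loc_reach : ∀ (C : List (TArc L R)) (a b : TArc L R) (D : List (TArc L R)),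
    List.Chain' (fun x y : TArc L R => x.endLoc = y.startLoc) (a :: (C ++ b :: D)) →
    (∀ c ∈ C, isTripA c = false) → b.startLoc = a.endLoc := by
  intro C
  induction C with
  | nil =>
    intro a b D h _
    simp only [List.nil_append, List.Chain', List.isChain_cons_cons] at h
    exact h.1.symm
  | cons c C ih =>
    intro a b D h hnt
    simp only [List.cons_append, List.Chain', List.isChain_cons_cons] at h
    have h1 : c.endLoc = a.endLoc := by
      rw [nontrip_loc c (hnt c (by simp))]; exact h.1.symm
    have := ih c b D h.2 (fun x hx => hnt x (by simp [hx]))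
    rw [this, h1]

/-- decompose a list at the first element satisfying `p` -/
lemma first_sat {α : Type*} (p : α → Bool) :
    ∀ (l : List α), (∃ a ∈ l, p a = true) →
      ∃ l1 a l2, l = l1 ++ a :: l2 ∧ p a = true ∧ ∀ b ∈ l1, p b = false := by
  intro l
  induction l with
  | nil => rintro ⟨a, ha, _⟩; simp at ha
  | cons x l ih =>
    intro h
    by_cases hx : p x = true
    · exact ⟨[], x, l, by simp, hx, by simp⟩
    · obtain ⟨a, ha, hpa⟩ := h
      rcases List.mem_cons.1 ha with rfl | ha
      · exact absurd hpa hx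
      · obtain ⟨l1, a, l2, rfl, h1, h2⟩ := ih ⟨a, ha, hpa⟩
        exact ⟨x :: l1, a, l2, by simp, h1, by
          intro b hb
          rcases List.mem_cons.1 hb with rfl | hb
          · simpa using hx
          · exact h2 b hb⟩

/-- the request of a service arc -/
def reqOf : TArc L R → Option R
  | TArc.pickup r _ _ _ => some r
  | TArc.delivery r _ _ _ => some r
  | _ => none

variable [DecidableEq R]

/-- the set of requests served in a list -/
def reqSet (Q : List (TArc L R)) : Finset R := (Q.filterMap reqOf).toFinset

lemma mem_reqSet_of_pickup {Q : List (TArc L R)} {r : R} {l' : L} {i j : ℕ}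
    (h : TArc.pickup r l' i j ∈ Q) : r ∈ reqSet Q := by
  simp only [reqSet, List.mem_toFinset, List.mem_filterMap]
  exact ⟨_, h, rfl⟩

lemma mem_reqSet_of_delivery {Q : List (TArc L R)} {r : R} {l' : L} {i j : ℕ}
    (h : TArc.delivery r l' i j ∈ Q) : r ∈ reqSet Q := by
  simp only [reqSet, List.mem_toFinset, List.mem_filterMap]
  exact ⟨_, h, rfl⟩

lemma countP_pickup_eq_sum (Q : List (TArc L R)) (T : Finset R)
    (h : ∀ (r : R) (l' : L) (i j : ℕ), TArc.pickup r l' i j ∈ Q → r ∈ T) :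
    Q.countP TArc.isPickup = ∑ s ∈ T, Q.countP (TArc.isPickupOf s) := by
  induction Q with
  | nil => simp
  | cons a Q ih =>
    simp only [List.countP_cons]
    rw [ih (fun r l' i j hm => h r l' i j (by simp [hm])), Finset.sum_add_distrib]
    congr 1
    cases a with
    | pickup r0 l0 i0 j0 =>
      have hr0 : r0 ∈ T := h r0 l0 i0 j0 (by simp)
      simp only [TArc.isPickupOf, TArc.isPickup]
      simp [hr0]
    | rest l0 i0 => simp [TArc.isPickupOf, TArc.isPickup]
    | trip l1 l2 i0 j0 => simp [TArc.isPickupOf, TArc.isPickup]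
    | delivery r0 l0 i0 j0 => simp [TArc.isPickupOf, TArc.isPickup]

lemma countP_delivery_eq_sum (Q : List (TArc L R)) (T : Finset R)
    (h : ∀ (r : R) (l' : L) (i j : ℕ), TArc.delivery r l' i j ∈ Q → r ∈ T) :
    Q.countP TArc.isDelivery = ∑ s ∈ T, Q.countP (TArc.isDeliveryOf s) := by
  induction Q with
  | nil => simp
  | cons a Q ih =>
    simp only [List.countP_cons]
    rw [ih (fun r l' i j hm => h r l' i j (by simp [hm])), Finset.sum_add_distrib]
    congr 1
    cases a with
    | delivery r0 l0 i0 j0 =>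
      have hr0 : r0 ∈ T := h r0 l0 i0 j0 (by simp)
      simp only [TArc.isDeliveryOf, TArc.isDelivery]
      simp [hr0]
    | rest l0 i0 => simp [TArc.isDeliveryOf, TArc.isDelivery]
    | trip l1 l2 i0 j0 => simp [TArc.isDeliveryOf, TArc.isDelivery]
    | pickup r0 l0 i0 j0 => simp [TArc.isDeliveryOf, TArc.isDelivery]

variable [DecidableEq L]

/-- a pickup is eventually followed by the matching delivery at `ld r` -/
lemma deliv_later {lp ld : R → L} {P : List (TArc L R)} (hv : ValidRoute lp ld P)
    (l : L) :
    ∀ (X : List (TArc L R)) (r : R) (i j : ℕ) (Y : List (TArc L R)),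
      P = X ++ TArc.pickup r l i j :: Y →
      ∃ i' j', TArc.delivery r (ld r) i' j' ∈ Y := by
  obtain ⟨-, -, -, hdl, hbal, hord, honce, -⟩ := hv
  intro X r i j Y hP
  have hone := honce r
  have hbalr := hbal r
  have e1 : TArc.isPickupOf r (TArc.pickup r l i j) = true := by
    simp [TArc.isPickupOf]
  have e2 : TArc.isDeliveryOf r (TArc.pickup r l i j) = false := by
    simp [TArc.isDeliveryOf]
  rw [hP] at hone hbalr
  simp only [List.countP_append, List.countP_cons, e1, e2, Bool.false_eq_true, if_true,
    if_false] at hone hbalr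
  have hXd : X.countP (TArc.isDeliveryOf r) = 0 := by
    have := hord r X (TArc.pickup r l i j :: Y) hP
    omega
  have hYd : 0 < Y.countP (TArc.isDeliveryOf r) := by omega
  obtain ⟨a, ha, hpa⟩ := List.countP_pos_iff.1 hYd
  cases a with
  | delivery r'' l'' i' j' =>
    have : r'' = r := by simpa [TArc.isDeliveryOf] using hpa
    subst this
    have : l'' = ld r'' := hdl r'' l'' i' j' (by rw [hP]; simp [ha])
    subst this
    exact ⟨i', j', ha⟩
  | rest l0 i0 => simp [TArc.isDeliveryOf] at hpa
  | trip l1 l2 i0 j0 => simp [TArc.isDeliveryOf] at hpa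
  | pickup r0 l0 i0 j0 => simp [TArc.isDeliveryOf] at hpa

/-- no pickup can occur while the truck carries a request whose delivery is
elsewhere and has not moved yet -/
lemma no_pickup_carrying {lp ld : R → L} {P : List (TArc L R)} (hv : ValidRoute lp ld P)
    (l : L) :
    ∀ (X : List (TArc L R)) (r : R) (i j : ℕ) (Y1 : List (TArc L R)) (b : TArc L R)
      (Y2 : List (TArc L R)),
      P = X ++ TArc.pickup r l i j :: (Y1 ++ b :: Y2) → ld r ≠ l →
      (∀ c ∈ Y1, isTripA c = false) → b.isPickup = true → False := by
  obtain ⟨hch, -, -, hdl, hbal, hord, honce, hcap⟩ := hv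
  intro X r i j Y1 b Y2 hP hne hY1 hbp
  obtain ⟨r', lb, ib, jb, rfl⟩ : ∃ r' lb ib jb, b = TArc.pickup r' lb ib jb := by
    cases b <;> simp [TArc.isPickup] at hbp ⊢
  have hrr : r' ≠ r := by
    intro h; subst h
    have := honce r'
    rw [hP] at this
    simp [List.countP_append, List.countP_cons, TArc.isPickupOf] at this
    omega
  set pk : TArc L R := TArc.pickup r l i j with hpkdef
  set b : TArc L R := TArc.pickup r' lb ib jb with hbdef
  set Q : List (TArc L R) := X ++ pk :: (Y1 ++ [b]) with hQdef
  have hPQ : P = Q ++ Y2 := by rw [hP, hQdef]; simp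
  have hcapQ : Q.countP TArc.isPickup ≤ Q.countP TArc.isDelivery + 1 := hcap Q Y2 hPQ
  have hordQ : ∀ s : R, Q.countP (TArc.isDeliveryOf s) ≤ Q.countP (TArc.isPickupOf s) :=
    fun s => hord s Q Y2 hPQ
  have hXr0 : X.countP (TArc.isPickupOf r) = 0 := by
    have := honce r
    rw [hP, List.countP_append, List.countP_cons] at this
    have hpk' : (TArc.isPickupOf r pk) = true := by simp [hpkdef, TArc.isPickupOf]
    rw [if_pos hpk'] at this
    omega
  have hXrd0 : X.countP (TArc.isDeliveryOf r) = 0 := by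
    have := hord r X (pk :: (Y1 ++ b :: Y2)) hP
    omega
  have hY1rd0 : Y1.countP (TArc.isDeliveryOf r) = 0 := by
    rw [List.countP_eq_zero]
    intro c hc hdc
    obtain ⟨rc, lc, ic, jc, rfl⟩ : ∃ rc lc ic jc, c = TArc.delivery rc lc ic jc := by
      cases c <;> simp [TArc.isDeliveryOf] at hdc ⊢
    have hrc : rc = r := by simpa [TArc.isDeliveryOf] using hdc
    have hlc : lc = ld r := by
      rw [← hrc]; exact hdl rc lc ic jc (by rw [hP]; simp [hc])
    obtain ⟨C1, C2, hY1eq⟩ := List.append_of_mem hc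
    have hchl : P.Chain' (fun a b : TArc L R => a.endLoc = b.startLoc) :=
      hch.imp (fun _ _ h => h.1)
    have hsuf : (pk :: (Y1 ++ b :: Y2)).Chain'
        (fun a b : TArc L R => a.endLoc = b.startLoc) :=
      hchl.suffix ⟨X, hP.symm⟩
    have hsuf2 : (pk :: (C1 ++ (TArc.delivery rc lc ic jc) :: (C2 ++ b :: Y2))).Chain'
        (fun a b : TArc L R => a.endLoc = b.startLoc) := by
      rw [hY1eq] at hsuf; simpa using hsuf
    have := loc_reach C1 pk (TArc.delivery rc lc ic jc) (C2 ++ b :: Y2) hsuf2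
      (fun x hx => hY1 x (by rw [hY1eq]; simp [hx]))
    simp only [TArc.startLoc, TArc.endLoc, hpkdef] at this
    rw [hlc] at this
    exact hne this
  have hQrd : Q.countP (TArc.isDeliveryOf r) = 0 := by
    rw [hQdef]
    simp [List.countP_append, List.countP_cons, hXrd0, hY1rd0, TArc.isDeliveryOf,
      hpkdef, hbdef]
  have hQrp : 1 ≤ Q.countP (TArc.isPickupOf r) := by
    rw [hQdef]
    simp [List.countP_append, List.countP_cons, TArc.isPickupOf, hpkdef]
    omega
  have hQr' : Q.countP (TArc.isDeliveryOf r') + 1 ≤ Q.countP (TArc.isPickupOf r') := by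
    have h0 : P = (X ++ pk :: Y1) ++ b :: Y2 := by rw [hP]; simp
    have hthis := hord r' (X ++ pk :: Y1) (b :: Y2) h0
    have hq : Q = (X ++ pk :: Y1) ++ [b] := by rw [hQdef]; simp
    have h1 : TArc.isPickupOf r' b = true := by simp [hbdef, TArc.isPickupOf]
    have h2 : TArc.isDeliveryOf r' b = false := by simp [hbdef, TArc.isDeliveryOf]
    rw [hq]
    simp only [List.countP_append, List.countP_cons, List.countP_nil, h1, h2,
      Bool.false_eq_true, if_true, if_false] at hthis ⊢
    omega
  set T : Finset R := reqSet Q with hT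
  have hrT : r ∈ T := mem_reqSet_of_pickup (Q := Q) (l' := l) (i := i) (j := j)
    (by rw [hQdef]; simp [hpkdef])
  have hr'T : r' ∈ T := mem_reqSet_of_pickup (Q := Q) (l' := lb) (i := ib) (j := jb)
    (by rw [hQdef]; simp [hbdef])
  have hsump : Q.countP TArc.isPickup = ∑ s ∈ T, Q.countP (TArc.isPickupOf s) :=
    countP_pickup_eq_sum Q T (fun s l' i' j' hm => mem_reqSet_of_pickup hm)
  have hsumd : Q.countP TArc.isDelivery = ∑ s ∈ T, Q.countP (TArc.isDeliveryOf s) :=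
    countP_delivery_eq_sum Q T (fun s l' i' j' hm => mem_reqSet_of_delivery hm)
  have hkey : ∀ s ∈ T, Q.countP (TArc.isDeliveryOf s)
      + ((if s = r then 1 else 0) + (if s = r' then 1 else 0))
      ≤ Q.countP (TArc.isPickupOf s) := by
    intro s _
    by_cases h1 : s = r
    · subst h1
      rw [if_pos rfl, if_neg (fun h => hrr h.symm)]
      omega
    · by_cases h2 : s = r'
      · subst h2
        rw [if_neg h1, if_pos rfl]
        omega
      · rw [if_neg h1, if_neg h2]
        simpa using hordQ s
  have hsum2 := Finset.sum_le_sum hkey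
  rw [Finset.sum_add_distrib, Finset.sum_add_distrib, Finset.sum_ite_eq' T r (fun _ => 1),
    Finset.sum_ite_eq' T r' (fun _ => 1), if_pos hrT, if_pos hr'T] at hsum2
  omega

/-- the predicate counted in PD₁ -/
def pkAt (ld : R → L) (l : L) : TArc L R → Bool := fun a => match a with
  | TArc.pickup r l' _ _ => decide (l' = l) && decide (ld r ≠ l)
  | _ => false

/-- main induction for PD₁ -/
lemma key (ld : R → L) (l : L) :
    ∀ (n : ℕ) (P : List (TArc L R)), P.length ≤ n →
    P.Chain' (fun a b : TArc L R => a.endLoc = b.startLoc) →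
    (∀ (X : List (TArc L R)) (r : R) (i j : ℕ) (Y : List (TArc L R)),
      P = X ++ TArc.pickup r l i j :: Y → ld r ≠ l →
      ∃ i' j', TArc.delivery r (ld r) i' j' ∈ Y) →
    (∀ (X : List (TArc L R)) (r : R) (i j : ℕ) (Y1 : List (TArc L R)) (b : TArc L R)
      (Y2 : List (TArc L R)), P = X ++ TArc.pickup r l i j :: (Y1 ++ b :: Y2) →
      ld r ≠ l → (∀ c ∈ Y1, isTripA c = false) → b.isPickup = true → False) →
    P.countP (pkAt ld l) ≤ P.countP (TArc.isTripFrom l) := by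
  intro n
  induction n with
  | zero =>
    intro P hlen _ _ _
    have : P = [] := List.length_eq_zero_iff.1 (Nat.le_zero.1 hlen)
    subst this; simp
  | succ n ih =>
    intro P hlen hch H2 H3
    by_cases hex : ∃ a ∈ P, pkAt ld l a = true
    · obtain ⟨A, a0, Y', rfl, ha0, hA⟩ := first_sat (pkAt ld l) P hex
      obtain ⟨r0, i0, j0, rfl, hne⟩ :
          ∃ r0 i0 j0, a0 = TArc.pickup r0 l i0 j0 ∧ ld r0 ≠ l := by
        cases a0 with
        | pickup rr ll ii jj =>
          simp only [pkAt, Bool.and_eq_true, decide_eq_true_eq] at ha0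
          obtain ⟨rfl, h2⟩ := ha0
          exact ⟨rr, ii, jj, rfl, h2⟩
        | rest ll ii => simp [pkAt] at ha0
        | trip l1 l2 ii jj => simp [pkAt] at ha0
        | delivery rr ll ii jj => simp [pkAt] at ha0
      obtain ⟨i', j', hdel⟩ := H2 A r0 i0 j0 Y' rfl hne
      have hsuf : (TArc.pickup r0 l i0 j0 :: Y').Chain'
          (fun a b : TArc L R => a.endLoc = b.startLoc) :=
        hch.suffix ⟨A, rfl⟩
      have htrip : ∃ c ∈ Y', isTripA c = true := by
        by_contra hno
        push_neg at hno
        obtain ⟨C1, C2, hY'⟩ := List.append_of_mem hdel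
        have hsuf2 : (TArc.pickup r0 l i0 j0 ::
            (C1 ++ TArc.delivery r0 (ld r0) i' j' :: C2)).Chain'
            (fun a b : TArc L R => a.endLoc = b.startLoc) := by
          rw [hY'] at hsuf; exact hsuf
        have := loc_reach C1 (TArc.pickup r0 l i0 j0)
          (TArc.delivery r0 (ld r0) i' j') C2 hsuf2
          (fun c hc => by
            have := hno c (by rw [hY']; simp [hc])
            revert this; cases isTripA c <;> simp)
        simp only [TArc.startLoc, TArc.endLoc] at this
        exact hne this
      obtain ⟨C, t, D, rfl, ht, hC⟩ := first_sat isTripA Y' htrip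
      have htl : t.startLoc = l := by
        have := loc_reach C (TArc.pickup r0 l i0 j0) t D hsuf hC
        simpa [TArc.endLoc] using this
      obtain ⟨l1, l2, it, jt, rfl⟩ : ∃ l1 l2 it jt, t = TArc.trip l1 l2 it jt := by
        cases t <;> simp [isTripA] at ht ⊢
      have hl1 : l = l1 := by
        have : l1 = l := by simpa [TArc.startLoc] using htl
        exact this.symm
      subst hl1
      have hCnp : ∀ c ∈ C, pkAt ld l c = false := by
        intro c hc
        by_contra hcp
        have hcp' : pkAt ld l c = true := by
          revert hcp; cases (pkAt ld l c) <;> simp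
        have hcpk : c.isPickup = true := by
          cases c <;> simp [pkAt, TArc.isPickup] at hcp' ⊢
        obtain ⟨C1, C2, rfl⟩ := List.append_of_mem hc
        exact H3 A r0 i0 j0 C1 c (C2 ++ TArc.trip l l2 it jt :: D) (by simp) hne
          (fun x hx => hC x (by simp [hx])) hcpk
      have hlenD : D.length ≤ n := by
        simp only [List.length_append, List.length_cons] at hlen
        omega
      have hchD : D.Chain' (fun a b : TArc L R => a.endLoc = b.startLoc) :=
        hch.suffix ⟨A ++ TArc.pickup r0 l i0 j0 :: (C ++ [TArc.trip l l2 it jt]), by simp⟩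
      have H2D : ∀ (X : List (TArc L R)) (r : R) (i j : ℕ) (Y : List (TArc L R)),
          D = X ++ TArc.pickup r l i j :: Y → ld r ≠ l →
          ∃ i' j', TArc.delivery r (ld r) i' j' ∈ Y := by
        intro X r i j Y hXY hne'
        exact H2 (A ++ TArc.pickup r0 l i0 j0 :: (C ++ TArc.trip l l2 it jt :: X))
          r i j Y (by rw [hXY]; simp) hne'
      have H3D : ∀ (X : List (TArc L R)) (r : R) (i j : ℕ) (Y1 : List (TArc L R))
          (b : TArc L R) (Y2 : List (TArc L R)),
          D = X ++ TArc.pickup r l i j :: (Y1 ++ b :: Y2) → ld r ≠ l →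
          (∀ c ∈ Y1, isTripA c = false) → b.isPickup = true → False := by
        intro X r i j Y1 b Y2 hXY hne' hY1 hbp
        exact H3 (A ++ TArc.pickup r0 l i0 j0 :: (C ++ TArc.trip l l2 it jt :: X))
          r i j Y1 b Y2 (by rw [hXY]; simp) hne' hY1 hbp
      have ihD := ih D hlenD hchD H2D H3D
      have cA : A.countP (pkAt ld l) = 0 :=
        List.countP_eq_zero.2 (fun a ha => by simp [hA a ha])
      have cC : C.countP (pkAt ld l) = 0 :=
        List.countP_eq_zero.2 (fun a ha => by simp [hCnp a ha])
      have e1 : pkAt ld l (TArc.pickup r0 l i0 j0) = true := by simp [pkAt, hne]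
      have e2 : pkAt ld l (TArc.trip l l2 it jt) = false := rfl
      have e3 : TArc.isTripFrom l (TArc.trip l l2 it jt : TArc L R) = true := by
        simp [TArc.isTripFrom]
      have e4 : TArc.isTripFrom l (TArc.pickup r0 l i0 j0 : TArc L R) = false := rfl
      simp only [List.countP_append, List.countP_cons, e1, e2, e3, e4, cA, cC,
        Bool.false_eq_true, if_true, if_false]
      omega
    · push_neg at hex
      have : P.countP (pkAt ld l) = 0 :=
        List.countP_eq_zero.2 (fun a ha => hex a ha)
      rw [this]
      exact Nat.zero_le _

end PD1Aux
/-- The pickup-and-delivery trip inequality PD₁ is valid: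
for any valid truck route `P` in `G_LT` and any location `l`, the number of
trip arcs of `P` departing from `l` is at least the number of pickup arcs of
`P` at location `l` whose request's delivery location differs from `l`. -/
theorem stmt_6 {L R : Type} [DecidableEq L] [DecidableEq R]
    (lp ld : R → L) (P : List (TArc L R))
    (hvalid : ValidRoute lp ld P) (l : L) :
    P.countP (fun a => match a with
        | TArc.pickup r l' _ _ => decide (l' = l) && decide (ld r ≠ l)
        | _ => false)
      ≤ P.countP (TArc.isTripFrom l) := by
  have hch : P.Chain' (fun a b : TArc L R => a.endLoc = b.startLoc) :=
    hvalid.1.imp (fun _ _ h => h.1)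
  have H2 : ∀ (X : List (TArc L R)) (r : R) (i j : ℕ) (Y : List (TArc L R)),
      P = X ++ TArc.pickup r l i j :: Y → ld r ≠ l →
      ∃ i' j', TArc.delivery r (ld r) i' j' ∈ Y :=
    fun X r i j Y h _ => PD1Aux.deliv_later hvalid l X r i j Y h
  have H3 := PD1Aux.no_pickup_carrying hvalid l
  exact PD1Aux.key ld l P.length P le_rfl hch H2 H3
end

section
/- The time-restricted pickup-and-delivery inequality PD₂ is valid: for any valid truck route P in G_LT (paired, ordered services, delivery locations distinct from pickup locations), any location l, and any time instant i, the number of trip arcs of P departing from l with start time at least i + s (where s is the pickup service time) is at least the number of pickup arcs of P at location l with start time at least i. -/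
section PD2Aux

variable {L R : Type} [DecidableEq L] [DecidableEq R]

/-- Request of a delivery arc, if any. -/
def reqDel : TArc L R → Option R
  | .delivery r _ _ _ => some r
  | _ => none

lemma countP_isDelivery_le_sum (Q : List (TArc L R)) (S : Finset R)
    (hS : ∀ (r : R) (l' : L) (i' j' : ℕ), TArc.delivery r l' i' j' ∈ Q → r ∈ S) :
    Q.countP TArc.isDelivery ≤ ∑ r ∈ S, Q.countP (TArc.isDeliveryOf r) := by
  induction Q with
  | nil => simp
  | cons a Q ih =>
    have hS' : ∀ (r : R) (l' : L) (i' j' : ℕ), TArc.delivery r l' i' j' ∈ Q → r ∈ S :=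
      fun r l' i' j' h => hS r l' i' j' (List.mem_cons_of_mem _ h)
    have ih' := ih hS'
    cases a with
    | delivery r0 l0 i0 j0 =>
      have hr0 : r0 ∈ S := hS r0 l0 i0 j0 (List.mem_cons_self)
      have hterm : ∀ r ∈ S, (TArc.delivery r0 l0 i0 j0 :: Q).countP (TArc.isDeliveryOf r)
          = Q.countP (TArc.isDeliveryOf r) + (if r0 = r then 1 else 0) := by
        intro r _
        by_cases h : r0 = r
        · rw [if_pos h, List.countP_cons_of_pos (by simp [TArc.isDeliveryOf, h])]
        · rw [if_neg h, List.countP_cons_of_neg (by simp [TArc.isDeliveryOf, h])]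
          omega
      rw [Finset.sum_congr rfl hterm, Finset.sum_add_distrib,
        Finset.sum_ite_eq S r0 (fun _ => 1), if_pos hr0,
        List.countP_cons_of_pos (by simp [TArc.isDelivery])]
      omega
    | rest l0 i0 =>
      rw [List.countP_cons_of_neg (by simp [TArc.isDelivery])]
      refine le_trans ih' (Finset.sum_le_sum fun r _ => ?_)
      rw [List.countP_cons_of_neg (by simp [TArc.isDeliveryOf])]
    | trip l1 l2 i0 j0 =>
      rw [List.countP_cons_of_neg (by simp [TArc.isDelivery])]
      refine le_trans ih' (Finset.sum_le_sum fun r _ => ?_)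
      rw [List.countP_cons_of_neg (by simp [TArc.isDeliveryOf])]
    | pickup r0 l0 i0 j0 =>
      rw [List.countP_cons_of_neg (by simp [TArc.isDelivery])]
      refine le_trans ih' (Finset.sum_le_sum fun r _ => ?_)
      rw [List.countP_cons_of_neg (by simp [TArc.isDeliveryOf])]

lemma sum_countP_isPickupOf_le (Q : List (TArc L R)) (S : Finset R) :
    ∑ r ∈ S, Q.countP (TArc.isPickupOf r) ≤ Q.countP TArc.isPickup := by
  induction Q with
  | nil => simp
  | cons a Q ih =>
    cases a with
    | pickup r0 l0 i0 j0 =>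
      have hterm : ∀ r ∈ S, (TArc.pickup r0 l0 i0 j0 :: Q).countP (TArc.isPickupOf r)
          = Q.countP (TArc.isPickupOf r) + (if r0 = r then 1 else 0) := by
        intro r _
        by_cases h : r0 = r
        · rw [if_pos h, List.countP_cons_of_pos (by simp [TArc.isPickupOf, h])]
        · rw [if_neg h, List.countP_cons_of_neg (by simp [TArc.isPickupOf, h])]
          omega
      rw [Finset.sum_congr rfl hterm, Finset.sum_add_distrib,
        Finset.sum_ite_eq S r0 (fun _ => 1),
        List.countP_cons_of_pos (by simp [TArc.isPickup])]
      split <;> omega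
    | rest l0 i0 =>
      rw [List.countP_cons_of_neg (by simp [TArc.isPickup])]
      refine le_trans (Finset.sum_le_sum fun r _ => ?_) ih
      rw [List.countP_cons_of_neg (by simp [TArc.isPickupOf])]
    | trip l1 l2 i0 j0 =>
      rw [List.countP_cons_of_neg (by simp [TArc.isPickup])]
      refine le_trans (Finset.sum_le_sum fun r _ => ?_) ih
      rw [List.countP_cons_of_neg (by simp [TArc.isPickupOf])]
    | delivery r0 l0 i0 j0 =>
      rw [List.countP_cons_of_neg (by simp [TArc.isPickup])]
      refine le_trans (Finset.sum_le_sum fun r _ => ?_) ih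
      rw [List.countP_cons_of_neg (by simp [TArc.isPickupOf])]

lemma countP_concat_pos {α : Type*} (p : α → Bool) (Q : List α) (a : α) (h : p a = true) :
    (Q ++ [a]).countP p = Q.countP p + 1 := by
  rw [List.countP_append, List.countP_cons_of_pos h, List.countP_nil]

lemma countP_concat_neg {α : Type*} (p : α → Bool) (Q : List α) (a : α) (h : ¬ p a = true) :
    (Q ++ [a]).countP p = Q.countP p := by
  rw [List.countP_append, List.countP_cons_of_neg h, List.countP_nil]
  omega

lemma delivery_le_pickup (Q : List (TArc L R))
    (hall : ∀ r0 : R, Q.countP (TArc.isDeliveryOf r0) ≤ Q.countP (TArc.isPickupOf r0)) :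
    Q.countP TArc.isDelivery ≤ Q.countP TArc.isPickup := by
  classical
  set S : Finset R := (Q.filterMap reqDel).toFinset with hSdef
  have cover : ∀ (r : R) (l' : L) (i' j' : ℕ), TArc.delivery r l' i' j' ∈ Q → r ∈ S := by
    intro r l' i' j' h
    rw [hSdef, List.mem_toFinset, List.mem_filterMap]
    exact ⟨_, h, rfl⟩
  calc Q.countP TArc.isDelivery ≤ ∑ r ∈ S, Q.countP (TArc.isDeliveryOf r) :=
        countP_isDelivery_le_sum Q S cover
    _ ≤ ∑ r ∈ S, Q.countP (TArc.isPickupOf r) := Finset.sum_le_sum (fun r _ => hall r)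
    _ ≤ Q.countP TArc.isPickup := sum_countP_isPickupOf_le Q S

lemma two_carried (Q : List (TArc L R)) (r r' : R) (hne : r ≠ r')
    (hall : ∀ r0 : R, Q.countP (TArc.isDeliveryOf r0) ≤ Q.countP (TArc.isPickupOf r0))
    (h1 : Q.countP (TArc.isDeliveryOf r) + 1 ≤ Q.countP (TArc.isPickupOf r))
    (h2 : Q.countP (TArc.isDeliveryOf r') + 1 ≤ Q.countP (TArc.isPickupOf r')) :
    Q.countP TArc.isDelivery + 2 ≤ Q.countP TArc.isPickup := by
  classical
  set T : Finset R := (((Q.filterMap reqDel).toFinset).erase r).erase r' with hTdef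
  set S : Finset R := insert r (insert r' T) with hSdef
  have hrT : r ∉ T := by
    intro h
    rw [hTdef] at h
    exact Finset.notMem_erase r _ (Finset.mem_of_mem_erase h)
  have hr'T : r' ∉ T := by
    intro h
    rw [hTdef] at h
    exact Finset.notMem_erase r' _ h
  have hrS : r ∉ insert r' T := by
    simp [hne, hrT]
  have cover : ∀ (r0 : R) (l' : L) (i' j' : ℕ), TArc.delivery r0 l' i' j' ∈ Q → r0 ∈ S := by
    intro r0 l' i' j' h
    by_cases hr0 : r0 = r
    · rw [hSdef]; simp [hr0]
    by_cases hr0' : r0 = r'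
    · rw [hSdef]; simp [hr0']
    rw [hSdef]
    have : r0 ∈ (Q.filterMap reqDel).toFinset := by
      rw [List.mem_toFinset, List.mem_filterMap]; exact ⟨_, h, rfl⟩
    simp [hTdef, hr0, hr0', this]
  have hd := countP_isDelivery_le_sum Q S cover
  have hp := sum_countP_isPickupOf_le Q S
  rw [hSdef, Finset.sum_insert hrS, Finset.sum_insert hr'T] at hd hp
  have hT : ∑ r0 ∈ T, Q.countP (TArc.isDeliveryOf r0) ≤ ∑ r0 ∈ T, Q.countP (TArc.isPickupOf r0) :=
    Finset.sum_le_sum (fun r0 _ => hall r0)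
  omega

end PD2Aux

/-- The time-restricted pickup-and-delivery inequality PD₂ is
valid: for any valid truck route `P` in `G_LT` in which every pickup takes `s`
time units (`s ≥ 1` is the pickup service time) and delivery locations are
distinct from pickup locations, any location `l` and any time instant `i`, the
number of trip arcs of `P` departing from `l` with start time at least `i + s`
is at least the number of pickup arcs of `P` at location `l` with start time at
least `i`. -/
theorem stmt_7 {L R : Type} [DecidableEq L] [DecidableEq R]
    (lp ld : R → L) (P : List (TArc L R))
    (hvalid : ValidRoute lp ld P)
    (s : ℕ) (hs : 1 ≤ s)
    (hdur : ∀ (r : R) (l' : L) (i' j' : ℕ), TArc.pickup r l' i' j' ∈ P → j' = i' + s)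
    (hdiff : ∀ r : R, lp r ≠ ld r)
    (l : L) (i : ℕ) :
    P.countP (fun a => match a with
        | TArc.pickup _ l' i' _ => decide (l' = l) && decide (i ≤ i')
        | _ => false)
      ≤ P.countP (fun a => TArc.isTripFrom l a && decide (i + s ≤ a.startTime)) := by
  classical
  obtain ⟨hchain, hmono, hploc, hdloc, hpaired, hord, honce, hcap⟩ := hvalid
  set pPred : TArc L R → Bool := (fun a => match a with
      | TArc.pickup _ l' i' _ => decide (l' = l) && decide (i ≤ i')
      | _ => false) with hpP
  set tPred : TArc L R → Bool := (fun a => TArc.isTripFrom l a && decide (i + s ≤ a.startTime)) with htP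
  have hpP_rest : ∀ l0 i0, pPred (TArc.rest l0 i0) = false := by intro l0 i0; rw [hpP]
  have hpP_trip : ∀ l1 l2 i0 j0, pPred (TArc.trip l1 l2 i0 j0) = false := by intro l1 l2 i0 j0; rw [hpP]
  have hpP_del : ∀ r0 l0 i0 j0, pPred (TArc.delivery r0 l0 i0 j0) = false := by
    intro r0 l0 i0 j0; rw [hpP]
  have hpP_pick : ∀ r0 l0 i0 j0,
      pPred (TArc.pickup r0 l0 i0 j0) = (decide (l0 = l) && decide (i ≤ i0)) := by
    intro r0 l0 i0 j0; rw [hpP]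
  have htP_rest : ∀ l0 i0, tPred (TArc.rest l0 i0) = false := by intro l0 i0; rw [htP]; rfl
  have htP_pick : ∀ r0 l0 i0 j0, tPred (TArc.pickup r0 l0 i0 j0) = false := by
    intro r0 l0 i0 j0; rw [htP]; rfl
  have htP_del : ∀ r0 l0 i0 j0, tPred (TArc.delivery r0 l0 i0 j0) = false := by
    intro r0 l0 i0 j0; rw [htP]; rfl
  have htP_trip : ∀ l1 l2 i0 j0,
      tPred (TArc.trip l1 l2 i0 j0) = (decide (l1 = l) && decide (i + s ≤ i0)) := by
    intro l1 l2 i0 j0; rw [htP]; rfl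
  suffices H : ∀ Q : List (TArc L R), Q <+: P →
      (Q.countP pPred ≤ Q.countP tPred ∨
       (Q.countP pPred = Q.countP tPred + 1 ∧
        ∃ r : R, Q.countP (TArc.isPickupOf r) = 1 ∧ Q.countP (TArc.isDeliveryOf r) = 0 ∧
          lp r = l ∧ Q.countP TArc.isPickup = Q.countP TArc.isDelivery + 1 ∧
          ∃ b : TArc L R, Q.getLast? = some b ∧ b.endLoc = l ∧ i + s ≤ b.endTime)) by
    rcases H P (List.prefix_refl P) with h | ⟨_, r, h1, h2, _⟩
    · exact h
    · have := hpaired r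
      omega
  intro Q
  induction Q using List.reverseRecOn with
  | nil => intro _; left; simp
  | append_singleton Q a ih =>
    intro hQ
    obtain ⟨rest, hPeq⟩ := hQ
    have hQaP : Q ++ [a] <+: P := ⟨rest, hPeq⟩
    have hQpre : Q <+: P := (List.prefix_append Q [a]).trans hQaP
    have hQrest : P = Q ++ ([a] ++ rest) := by rw [← hPeq, List.append_assoc]
    have haP : a ∈ P := by rw [← hPeq]; simp
    have hordQ : ∀ r0 : R, Q.countP (TArc.isDeliveryOf r0) ≤ Q.countP (TArc.isPickupOf r0) :=
      fun r0 => hord r0 Q ([a] ++ rest) hQrest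
    have hchainQa : (Q ++ [a]).Chain'
        (fun a b => a.endLoc = b.startLoc ∧ a.endTime = b.startTime) := by
      have h := hchain
      rw [← hPeq] at h; change List.IsChain _ _ at h; rw [List.isChain_append] at h
      exact h.1
    have hlink : ∀ b : TArc L R, Q.getLast? = some b →
        b.endLoc = a.startLoc ∧ b.endTime = a.startTime := by
      intro b hb
      change List.IsChain _ _ at hchainQa
      rw [List.isChain_append] at hchainQa
      exact hchainQa.2.2 b hb a rfl
    rcases ih hQpre with hc1 | ⟨hpc, r, hp1, hd0, hlpr, hbal, b, hlast, hbl, hbt⟩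
    · -- case 1 : pc(Q) ≤ tc(Q)
      by_cases hpa : pPred a = true
      · -- a is a counted pickup
        have hpcnew : (Q ++ [a]).countP pPred = Q.countP pPred + 1 := countP_concat_pos _ _ _ hpa
        rcases a with ⟨l0,i0⟩ | ⟨l1,l2,i0,j0⟩ | ⟨r',l',i',j'⟩ | ⟨r0,l0,i0,j0⟩
        · exact absurd hpa (by simp [hpP])
        · exact absurd hpa (by simp [hpP])
        · -- pickup r' l' i' j'
          rw [hpP] at hpa
          simp only [Bool.and_eq_true, decide_eq_true_eq] at hpa
          obtain ⟨hl', hi'⟩ := hpa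
          have htcnew : (Q ++ [TArc.pickup r' l' i' j']).countP tPred = Q.countP tPred :=
            countP_concat_neg _ _ _ (by simp [htP, TArc.isTripFrom])
          rcases Nat.lt_or_ge (Q.countP pPred) (Q.countP tPred) with hlt | hge
          · left; omega
          · have heq : Q.countP pPred = Q.countP tPred := le_antisymm hc1 hge
            right
            refine ⟨by omega, r', ?_, ?_, ?_, ?_, TArc.pickup r' l' i' j', List.getLast?_concat, hl', ?_⟩
            · -- exactly one pickup of r'
              have h1 : (Q ++ [TArc.pickup r' l' i' j']).countP (TArc.isPickupOf r')
                  = Q.countP (TArc.isPickupOf r') + 1 :=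
                countP_concat_pos _ _ _ (by simp [TArc.isPickupOf])
              have h2 := (hQaP.sublist).countP_le (p := TArc.isPickupOf r')
              have h3 := honce r'
              omega
            · -- no delivery of r' yet
              have h1 : (Q ++ [TArc.pickup r' l' i' j']).countP (TArc.isDeliveryOf r')
                  = Q.countP (TArc.isDeliveryOf r') :=
                countP_concat_neg _ _ _ (by simp [TArc.isDeliveryOf])
              have h2 : (Q ++ [TArc.pickup r' l' i' j']).countP (TArc.isPickupOf r')
                  = Q.countP (TArc.isPickupOf r') + 1 :=
                countP_concat_pos _ _ _ (by simp [TArc.isPickupOf])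
              have h3 := (hQaP.sublist).countP_le (p := TArc.isPickupOf r')
              have h4 := honce r'
              have h5 := hordQ r'
              omega
            · -- lp r' = l
              rw [← hploc r' l' i' j' haP]; exact hl'
            · -- one carried
              have h1 : (Q ++ [TArc.pickup r' l' i' j']).countP TArc.isPickup
                  = Q.countP TArc.isPickup + 1 :=
                countP_concat_pos _ _ _ (by simp [TArc.isPickup])
              have h2 : (Q ++ [TArc.pickup r' l' i' j']).countP TArc.isDelivery
                  = Q.countP TArc.isDelivery :=
                countP_concat_neg _ _ _ (by simp [TArc.isDelivery])
              have h3 := hcap (Q ++ [TArc.pickup r' l' i' j']) rest hPeq.symm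
              have h4 := delivery_le_pickup Q hordQ
              omega
            · -- end time of the pickup arc
              have hj' : j' = i' + s := hdur r' l' i' j' haP
              show i + s ≤ j'
              omega
        · exact absurd hpa (by simp [hpP])
      · -- a is not a counted pickup: stay in case 1
        left
        have h1 : (Q ++ [a]).countP pPred = Q.countP pPred := countP_concat_neg _ _ _ hpa
        have h2 := (List.sublist_append_left Q [a]).countP_le (p := tPred)
        omega
    · -- case 2 : pc(Q) = tc(Q) + 1, carrying r, parked at l
      rcases a with ⟨l0,i0⟩ | ⟨l1,l2,i0,j0⟩ | ⟨r0,l0,i0,j0⟩ | ⟨r0,l0,i0,j0⟩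
      · -- rest arc: stay in case 2
        obtain ⟨hba1, hba2⟩ := hlink b hlast
        right
        have h1 : (Q ++ [TArc.rest l0 i0]).countP pPred = Q.countP pPred :=
          countP_concat_neg _ _ _ (by simp [hpP])
        have h2 : (Q ++ [TArc.rest l0 i0]).countP tPred = Q.countP tPred :=
          countP_concat_neg _ _ _ (by simp [htP, TArc.isTripFrom])
        refine ⟨by omega, r, ?_, ?_, hlpr, ?_, TArc.rest l0 i0, List.getLast?_concat, ?_, ?_⟩
        · rw [countP_concat_neg _ _ _ (by simp [TArc.isPickupOf])]; exact hp1
        · rw [countP_concat_neg _ _ _ (by simp [TArc.isDeliveryOf])]; exact hd0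
        · rw [countP_concat_neg _ _ _ (by simp [TArc.isPickup]),
            countP_concat_neg _ _ _ (by simp [TArc.isDelivery])]
          exact hbal
        · show l0 = l
          have : b.endLoc = l0 := hba1
          rw [← this]; exact hbl
        · show i + s ≤ i0 + 1
          have : b.endTime = i0 := hba2
          omega
      · -- trip arc: it departs from l at time ≥ i + s
        obtain ⟨hba1, hba2⟩ := hlink b hlast
        have hl1 : l1 = l := by
          have : b.endLoc = l1 := hba1
          rw [← this]; exact hbl
        have hi0 : i + s ≤ i0 := by
          have : b.endTime = i0 := hba2
          omega
        left
        have h1 : (Q ++ [TArc.trip l1 l2 i0 j0]).countP pPred = Q.countP pPred :=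
          countP_concat_neg _ _ _ (by simp [hpP])
        have h2 : (Q ++ [TArc.trip l1 l2 i0 j0]).countP tPred = Q.countP tPred + 1 :=
          countP_concat_pos _ _ _ (by simp [htP, TArc.isTripFrom, TArc.startTime, hl1, hi0])
        omega
      · -- pickup arc while carrying: violates capacity
        exfalso
        have h1 : (Q ++ [TArc.pickup r0 l0 i0 j0]).countP TArc.isPickup
            = Q.countP TArc.isPickup + 1 :=
          countP_concat_pos _ _ _ (by simp [TArc.isPickup])
        have h2 : (Q ++ [TArc.pickup r0 l0 i0 j0]).countP TArc.isDelivery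
            = Q.countP TArc.isDelivery :=
          countP_concat_neg _ _ _ (by simp [TArc.isDelivery])
        have h3 := hcap (Q ++ [TArc.pickup r0 l0 i0 j0]) rest hPeq.symm
        omega
      · -- delivery arc while carrying: impossible
        exfalso
        obtain ⟨hba1, hba2⟩ := hlink b hlast
        have hl0 : l0 = l := by
          have : b.endLoc = l0 := hba1
          rw [← this]; exact hbl
        have hld : l0 = ld r0 := hdloc r0 l0 i0 j0 haP
        by_cases hr : r0 = r
        · exact hdiff r (by rw [hlpr, ← hr, ← hld, hl0])
        · have h1 : Q.countP (TArc.isDeliveryOf r) + 1 ≤ Q.countP (TArc.isPickupOf r) := by omega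
          have h2 : Q.countP (TArc.isDeliveryOf r0) + 1 ≤ Q.countP (TArc.isPickupOf r0) := by
            have ha := hord r0 (Q ++ [TArc.delivery r0 l0 i0 j0]) rest hPeq.symm
            have hb1 : (Q ++ [TArc.delivery r0 l0 i0 j0]).countP (TArc.isDeliveryOf r0)
                = Q.countP (TArc.isDeliveryOf r0) + 1 :=
              countP_concat_pos _ _ _ (by simp [TArc.isDeliveryOf])
            have hb2 : (Q ++ [TArc.delivery r0 l0 i0 j0]).countP (TArc.isPickupOf r0)
                = Q.countP (TArc.isPickupOf r0) :=
              countP_concat_neg _ _ _ (by simp [TArc.isPickupOf])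
            omega
          have := two_carried Q r r0 (fun h => hr h.symm) hordQ h1 h2
          omega
end

section
/- The generalized pickup-and-delivery inequality PD₃ is valid: let r be a request, e₁ a pickup arc of r, e₂ a delivery arc of r with 𝓘'(e₁) + len(l^P_r, l^D_r) ≤ 𝓘(e₂), and V' a subset of trucks. For any collection of valid truck routes (one per truck in V') such that request r is served by at most one truck overall, the quantity (number of selected pickup arcs of r with start time ≥ 𝓘(e₁)) + (number of selected delivery arcs of r with end time ≤ 𝓘'(e₂)), summed over trucks in V', minus 1, is at most the total number over V' of selected trip arcs departing from l^P_r with start time ≥ 𝓘'(e₁) and end time ≤ 𝓘(e₂). -/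
section Aux
variable {L R : Type} [DecidableEq L] [DecidableEq R]

abbrev Linked : TArc L R → TArc L R → Prop :=
  fun a b => a.endLoc = b.startLoc ∧ a.endTime = b.startTime

lemma nonTrip_loc (a : TArc L R) (h : ∀ l1 l2 i j, a ≠ TArc.trip l1 l2 i j) :
    a.endLoc = a.startLoc := by
  cases a with
  | trip l1 l2 i j => exact absurd rfl (h l1 l2 i j)
  | _ => rfl

/-- In a chained, time-monotone list, every arc ends no later than the last arc. -/
lemma endTime_le_last : ∀ (Q : List (TArc L R)), Q.Chain' Linked →
    (∀ a ∈ Q, a.startTime ≤ a.endTime) →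
    ∀ b ∈ Q, ∀ g ∈ Q.getLast?, b.endTime ≤ g.endTime := by
  intro Q
  induction Q with
  | nil => intro _ _ b hb; simp at hb
  | cons a Q ih =>
    intro hch hmono b hb g hg
    cases Q with
    | nil =>
      simp at hb hg; subst hb; subst hg; exact le_rfl
    | cons c rest =>
      rw [List.getLast?_cons_cons] at hg
      have hch' : (c :: rest).Chain' Linked := (List.isChain_cons.1 hch).2
      have hmono' : ∀ a ∈ c :: rest, a.startTime ≤ a.endTime :=
        fun x hx => hmono x (List.mem_cons_of_mem _ hx)
      rcases List.mem_cons.1 hb with rfl | hb'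
      · have hlink : Linked b c := (List.isChain_cons.1 hch).1 c rfl
        have h1 := ih hch' hmono' c (by simp) g hg
        have hc := hmono' c (by simp)
        rw [hlink.2]; omega
      · exact ih hch' hmono' b hb' g hg

/-- In a chained list starting at location `x` at time ≥ `t` and ending away
from `x`, there is a trip arc departing `x` at time ≥ `t`. -/
lemma findTrip (x : L) (t : ℕ) : ∀ (Q : List (TArc L R)), Q.Chain' Linked →
    (∀ a ∈ Q, a.startTime ≤ a.endTime) →
    (∀ h ∈ Q.head?, h.startLoc = x ∧ t ≤ h.startTime) →
    (∀ g ∈ Q.getLast?, g.endLoc ≠ x) →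
    Q = [] ∨ ∃ b ∈ Q, TArc.isTripFrom x b = true ∧ t ≤ b.startTime := by
  intro Q
  induction Q with
  | nil => intro _ _ _ _; exact Or.inl rfl
  | cons a Q ih =>
    intro hch hmono hhead hlast
    right
    obtain ⟨hax, hat⟩ := hhead a (by simp)
    by_cases haend : a.endLoc = x
    · -- recurse
      cases Q with
      | nil => exact absurd haend (by simpa using hlast a (by simp))
      | cons c rest =>
        have hlink : Linked a c := (List.isChain_cons.1 hch).1 c rfl
        have hch' : (c :: rest).Chain' Linked := (List.isChain_cons.1 hch).2
        have hmono' : ∀ y ∈ c :: rest, y.startTime ≤ y.endTime :=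
          fun y hy => hmono y (List.mem_cons_of_mem _ hy)
        have hhead' : ∀ h ∈ (c :: rest).head?, h.startLoc = x ∧ t ≤ h.startTime := by
          intro h hh; simp at hh; subst hh
          refine ⟨hlink.1 ▸ haend ▸ rfl, ?_⟩
          have := hmono a (by simp)
          omega
        have hlast' : ∀ g ∈ (c :: rest).getLast?, g.endLoc ≠ x := by
          intro g hg
          exact hlast g (by rw [List.getLast?_cons_cons]; exact hg)
        rcases ih hch' hmono' hhead' hlast' with h | ⟨b, hb, hbx, hbt⟩
        · simp at h
        · exact ⟨b, List.mem_cons_of_mem _ hb, hbx, hbt⟩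
    · -- a is a trip from x
      have htrip : ∃ l1 l2 i j, a = TArc.trip l1 l2 i j := by
        by_contra hcon
        push_neg at hcon
        exact haend ((nonTrip_loc a hcon).trans hax)
      obtain ⟨l1, l2, i, j, rfl⟩ := htrip
      refine ⟨_, by simp, ?_, hat⟩
      simp [TArc.isTripFrom]
      exact hax

end Aux


section Key
variable {L R : Type} [DecidableEq L] [DecidableEq R]

lemma key_trip (lp ld : R → L) (r : R) (sP sD a1 a2 : ℕ)
    (hdiff : lp r ≠ ld r) (P : List (TArc L R))
    (hv : ValidRoute lp ld P)
    (hdP : ∀ (l' : L) (i' j' : ℕ), TArc.pickup r l' i' j' ∈ P → j' = i' + sP)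
    (hdD : ∀ (l' : L) (i' j' : ℕ), TArc.delivery r l' i' j' ∈ P → j' = i' + sD)
    (i j : ℕ) (hpk : TArc.pickup r (lp r) i j ∈ P) (hi : a1 ≤ i)
    (i' j' : ℕ) (hdl : TArc.delivery r (ld r) i' j' ∈ P) (hj' : j' ≤ a2 + sD) :
    ∃ b ∈ P, (TArc.isTripFrom (lp r) b && decide (a1 + sP ≤ b.startTime) &&
      decide (b.endTime ≤ a2)) = true := by
  obtain ⟨hchain, hmono, hlocP, hlocD, hpair, horder, hone, -⟩ := hv
  have hj : j = i + sP := hdP _ _ _ hpk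
  have hji' : j' = i' + sD := hdD _ _ _ hdl
  have hi2 : i' ≤ a2 := by omega
  -- pickup precedes delivery
  obtain ⟨C, D, hPCD⟩ := List.append_of_mem hpk
  have hdlD : TArc.delivery r (ld r) i' j' ∈ D := by
    have hmem : TArc.delivery r (ld r) i' j' ∈ C ++ TArc.pickup r (lp r) i j :: D :=
      hPCD ▸ hdl
    rcases List.mem_append.1 hmem with hC | hpkD
    · exfalso
      obtain ⟨C1, C2, hC12⟩ := List.append_of_mem hC
      have hsplit : P = (C1 ++ [TArc.delivery r (ld r) i' j']) ++
          (C2 ++ TArc.pickup r (lp r) i j :: D) := by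
        rw [hPCD, hC12]; simp
      have h2 := horder r _ _ hsplit
      have h1 : 0 < (C1 ++ [TArc.delivery r (ld r) i' j']).countP (TArc.isDeliveryOf r) :=
        List.countP_pos_iff.2 ⟨TArc.delivery r (ld r) i' j', by simp, by simp [TArc.isDeliveryOf]⟩
      have h3 : 0 < (C2 ++ TArc.pickup r (lp r) i j :: D).countP (TArc.isPickupOf r) :=
        List.countP_pos_iff.2 ⟨TArc.pickup r (lp r) i j, by simp, by simp [TArc.isPickupOf]⟩
      have h4 := hone r
      rw [hsplit, List.countP_append] at h4
      omega
    · rcases List.mem_cons.1 hpkD with heq | hD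
      · exact absurd heq (by simp)
      · exact hD
  obtain ⟨D1, D2, hDD⟩ := List.append_of_mem hdlD
  -- the segment between pickup and delivery
  have hMinfix : (TArc.pickup r (lp r) i j :: (D1 ++ [TArc.delivery r (ld r) i' j'])) <:+: P :=
    ⟨C, D2, by rw [hPCD, hDD]; simp⟩
  have hchM := hchain.infix hMinfix
  obtain ⟨hlinkhd, hchS⟩ := List.isChain_cons.1 hchM
  have hmemP : ∀ a ∈ D1 ++ [TArc.delivery r (ld r) i' j'], a ∈ P := by
    intro a ha
    rw [hPCD, hDD]
    rcases List.mem_append.1 ha with h | h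
    · simp [h]
    · simp at h; simp [h]
  have hmonoS : ∀ a ∈ D1 ++ [TArc.delivery r (ld r) i' j'], a.startTime ≤ a.endTime :=
    fun a ha => hmono a (hmemP a ha)
  have hheadS : ∀ h ∈ (D1 ++ [TArc.delivery r (ld r) i' j']).head?,
      h.startLoc = lp r ∧ a1 + sP ≤ h.startTime := by
    intro h hh
    have hlink := hlinkhd h hh
    refine ⟨hlink.1.symm, ?_⟩
    · have : (TArc.pickup r (lp r) i j).endTime = h.startTime := hlink.2
      simp [TArc.endTime] at this
      omega
  have hlastS : ∀ g ∈ (D1 ++ [TArc.delivery r (ld r) i' j']).getLast?, g.endLoc ≠ lp r := by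
    intro g hg
    rw [List.getLast?_concat] at hg
    simp at hg
    subst hg
    simp [TArc.endLoc]
    exact fun h => hdiff h.symm
  rcases findTrip (lp r) (a1 + sP) _ hchS hmonoS hheadS hlastS with hnil | ⟨b, hbS, hbx, hbt⟩
  · simp at hnil
  · -- b is in D1, before the delivery
    have hbD1 : b ∈ D1 := by
      rcases List.mem_append.1 hbS with h | h
      · exact h
      · simp at h
        subst h
        simp [TArc.isTripFrom] at hbx
    -- end time bound
    obtain ⟨hchD1, -, hjunc⟩ := List.isChain_append.1 hchS
    have hD1ne : D1 ≠ [] := List.ne_nil_of_mem hbD1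
    have hg : D1.getLast hD1ne ∈ D1.getLast? := by
      rw [List.getLast?_eq_getLast hD1ne]; simp
    have hlinklast := hjunc _ hg (TArc.delivery r (ld r) i' j') (by simp)
    have hble : b.endTime ≤ (D1.getLast hD1ne).endTime :=
      endTime_le_last D1 hchD1 (fun a ha => hmonoS a (List.mem_append_left _ ha)) b hbD1 _ hg
    have hlt : (D1.getLast hD1ne).endTime = i' := hlinklast.2
    refine ⟨b, hmemP b hbS, ?_⟩
    simp only [Bool.and_eq_true, decide_eq_true_eq]
    exact ⟨⟨hbx, hbt⟩, by omega⟩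

lemma perTruck (lp ld : R → L) (r : R) (sP sD a1 a2 : ℕ) (hdiff : lp r ≠ ld r)
    (P : List (TArc L R)) (hv : ValidRoute lp ld P)
    (hdP : ∀ (l' : L) (i' j' : ℕ), TArc.pickup r l' i' j' ∈ P → j' = i' + sP)
    (hdD : ∀ (l' : L) (i' j' : ℕ), TArc.delivery r l' i' j' ∈ P → j' = i' + sD) :
    P.countP (fun a => TArc.isPickupOf r a && decide (a1 ≤ a.startTime)) +
      P.countP (fun a => TArc.isDeliveryOf r a && decide (a.endTime ≤ a2 + sD)) ≤
    P.countP (fun a => TArc.isTripFrom (lp r) a && decide (a1 + sP ≤ a.startTime) &&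
      decide (a.endTime ≤ a2)) + P.countP (TArc.isPickupOf r) := by
  obtain ⟨hchain, hmono, hlocP, hlocD, hpair, horder, hone, hcap⟩ := hv
  have hA : P.countP (fun a => TArc.isPickupOf r a && decide (a1 ≤ a.startTime)) ≤
      P.countP (TArc.isPickupOf r) :=
    List.countP_mono_left (fun x _ hx => by
      simp only [Bool.and_eq_true] at hx; exact hx.1)
  have hB : P.countP (fun a => TArc.isDeliveryOf r a && decide (a.endTime ≤ a2 + sD)) ≤
      P.countP (TArc.isPickupOf r) := by
    rw [hpair r]
    exact List.countP_mono_left (fun x _ hx => by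
      simp only [Bool.and_eq_true] at hx; exact hx.1)
  have h1 := hone r
  by_cases hA1 : 0 < P.countP (fun a => TArc.isPickupOf r a && decide (a1 ≤ a.startTime))
  · by_cases hB1 : 0 < P.countP (fun a => TArc.isDeliveryOf r a && decide (a.endTime ≤ a2 + sD))
    · obtain ⟨ap, hapP, hap⟩ := List.countP_pos_iff.1 hA1
      obtain ⟨ad, hadP, had⟩ := List.countP_pos_iff.1 hB1
      simp only [Bool.and_eq_true, decide_eq_true_eq] at hap had
      obtain ⟨hap1, hap2⟩ := hap
      obtain ⟨had1, had2⟩ := had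
      cases ap with
      | pickup r' l0 i0 j0 =>
        simp [TArc.isPickupOf] at hap1
        subst r'
        have hl0 := hlocP r l0 i0 j0 hapP
        subst hl0
        cases ad with
        | delivery r'' l1 i1 j1 =>
          simp [TArc.isPickupOf, TArc.isDeliveryOf] at had1
          subst r''
          have hl1 := hlocD r l1 i1 j1 hadP
          subst hl1
          have hj1 : j1 = i1 + sD := hdD _ _ _ hadP
          simp only [TArc.endTime] at had2
          obtain ⟨b, hbP, hb⟩ := key_trip lp ld r sP sD a1 a2 hdiff P
            ⟨hchain, hmono, hlocP, hlocD, hpair, horder, hone, hcap⟩ hdP hdD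
            i0 j0 hapP (by simpa [TArc.startTime] using hap2) i1 j1 hadP had2
          have hT : 0 < P.countP (fun a => TArc.isTripFrom (lp r) a &&
              decide (a1 + sP ≤ a.startTime) && decide (a.endTime ≤ a2)) :=
            List.countP_pos_iff.2 ⟨b, hbP, hb⟩
          omega
        | rest l1 i1 => simp [TArc.isDeliveryOf] at had1
        | trip l1 l2 i1 j1 => simp [TArc.isDeliveryOf] at had1
        | pickup r'' l1 i1 j1 => simp [TArc.isDeliveryOf] at had1
      | rest l0 i0 => simp [TArc.isPickupOf] at hap1
      | trip l1 l2 i0 j0 => simp [TArc.isPickupOf] at hap1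
      | delivery r' l0 i0 j0 => simp [TArc.isPickupOf] at hap1
    · omega
  · omega

end Key

/-- The generalized pickup-and-delivery inequality PD₃ is
valid.  Fix a request `r`, a pickup arc `e₁` of `r` with start time `a1` (so
`𝓘(e₁) = a1` and `𝓘'(e₁) = a1 + sP`, where `sP` is the pickup service time),
a delivery arc `e₂` of `r` with start time `a2` (so `𝓘(e₂) = a2` and
`𝓘'(e₂) = a2 + sD`), with `𝓘'(e₁) + len(l^P_r, l^D_r) ≤ 𝓘(e₂)`, and a subset
`V'` of trucks.  For any collection of valid truck routes (one per truck in
`V'`), all of whose pickups of `r` take `sP` time and deliveries of `r` take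
`sD` time, such that `r` is served by at most one truck of `V'` overall:
the number of selected pickup arcs of `r` with start time `≥ 𝓘(e₁)` plus the
number of selected delivery arcs of `r` with end time `≤ 𝓘'(e₂)`, summed over
`V'`, minus 1, is at most the total number over `V'` of trip arcs departing
from `l^P_r` with start time `≥ 𝓘'(e₁)` and end time `≤ 𝓘(e₂)`. -/
theorem stmt_8 {L R V : Type} [DecidableEq L] [DecidableEq R] [DecidableEq V]
    (lp ld : R → L) (r : R) (sP sD lenPD a1 a2 : ℕ)
    (hlen : 1 ≤ lenPD) (hwin : a1 + sP + lenPD ≤ a2)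
    (hdiff : lp r ≠ ld r)
    (V' : Finset V) (route : V → List (TArc L R))
    (hvalid : ∀ v ∈ V', ValidRoute lp ld (route v))
    (hdurP : ∀ v ∈ V', ∀ (l' : L) (i' j' : ℕ),
      TArc.pickup r l' i' j' ∈ route v → j' = i' + sP)
    (hdurD : ∀ v ∈ V', ∀ (l' : L) (i' j' : ℕ),
      TArc.delivery r l' i' j' ∈ route v → j' = i' + sD)
    (hserved : ∑ v ∈ V', (route v).countP (TArc.isPickupOf r) ≤ 1) :
    ∑ v ∈ V',
        ((route v).countP (fun a => TArc.isPickupOf r a && decide (a1 ≤ a.startTime)) +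
         (route v).countP (fun a => TArc.isDeliveryOf r a && decide (a.endTime ≤ a2 + sD)))
      ≤ (∑ v ∈ V', (route v).countP (fun a =>
          TArc.isTripFrom (lp r) a && decide (a1 + sP ≤ a.startTime) &&
            decide (a.endTime ≤ a2))) + 1 := by
  have hsum : ∑ v ∈ V',
      ((route v).countP (fun a => TArc.isPickupOf r a && decide (a1 ≤ a.startTime)) +
       (route v).countP (fun a => TArc.isDeliveryOf r a && decide (a.endTime ≤ a2 + sD)))
      ≤ ∑ v ∈ V', ((route v).countP (fun a =>
          TArc.isTripFrom (lp r) a && decide (a1 + sP ≤ a.startTime) &&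
            decide (a.endTime ≤ a2)) + (route v).countP (TArc.isPickupOf r)) := by
    refine Finset.sum_le_sum ?_
    intro v hv
    exact perTruck lp ld r sP sD a1 a2 hdiff (route v) (hvalid v hv)
      (hdurP v hv) (hdurD v hv)
  rw [Finset.sum_add_distrib, Finset.sum_add_distrib] at hsum
  rw [Finset.sum_add_distrib]
  have h2 := Nat.add_le_add_left hserved (∑ v ∈ V', (route v).countP (fun a =>
    TArc.isTripFrom (lp r) a && decide (a1 + sP ≤ a.startTime) && decide (a.endTime ≤ a2)))
  exact hsum.trans h2
end

section
/- The sequencing inequality SEC₁ is valid: let R' be a set of at least two requests, v a truck, and dur₀(R', v) the minimum time needed by v (starting from its start location at time 0, ignoring driver constraints) to deliver all requests in R'. Then in any valid route for truck v, the number of requests of R' whose delivery completes strictly before time dur₀(R', v) is at most |R'| − 1. -/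
/-! The given route `d` is itself one of the routes over which `dur₀` minimises, so
`dur₀ ≤ max_{r ∈ R'} d r`. Hence the request attaining that maximum is not delivered
strictly before `dur₀`. -/

theorem Finset.card_filter_lt_le_card_sub_one {ι α : Type*} [LinearOrder α] [OrderBot α]
    {s : Finset ι} {f : ι → α} {a : α} [DecidablePred fun i => f i < a] (h : a ≤ s.sup f) :
    (s.filter fun i => f i < a).card ≤ s.card - 1 := by
  rcases s.eq_empty_or_nonempty with rfl | hs
  · simp
  obtain ⟨i, hi, hsup⟩ := s.exists_mem_eq_sup hs f
  have hssub : (s.filter fun i => f i < a) ⊂ s :=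
    Finset.filter_ssubset.mpr ⟨i, hi, by rw [← hsup]; exact h.not_gt⟩
  have := Finset.card_lt_card hssub
  omega

theorem stmt_9_general {R : Type}
    (Feasible : (R → ℕ) → (R → ℕ) → Prop)
    (R' : Finset R)
    (dur0 : ℕ)
    (hdur : IsLeast {T : ℕ | ∃ p d, Feasible p d ∧ ∀ r ∈ R', d r ≤ T} dur0)
    (p d : R → ℕ) (hroute : Feasible p d) :
    (R'.filter (fun r => d r < dur0)).card ≤ R'.card - 1 :=
  Finset.card_filter_lt_le_card_sub_one (hdur.2 ⟨p, d, hroute, fun _ hr => Finset.le_sup hr⟩)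

/-- The sequencing inequality SEC₁ is valid.  Here
`Feasible p d` means that the pickup times `p` and delivery-completion times
`d` arise from a valid route of truck `v` starting at its start location at
time 0 (ignoring driver constraints): travelling to each pickup location,
waiting for time windows, loading, travelling to the delivery location,
waiting, unloading.  Let `R'` be a set of at least two requests and
`dur0 = dur₀(R', v)` the minimum time needed by `v` to deliver all requests of
`R'`, i.e. the least `T` such that some feasible route of `v` completes all
deliveries of `R'` by time `T` (the minimum over all permutations of `R'` of
the completion time of the last delivery).  Then in any valid route for `v`,
the number of requests of `R'` whose delivery completes strictly before
`dur0` is at most `|R'| − 1`. -/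
theorem stmt_9 {R : Type} [DecidableEq R]
    (Feasible : (R → ℕ) → (R → ℕ) → Prop)
    (R' : Finset R) (hR' : 2 ≤ R'.card)
    (dur0 : ℕ)
    (hdur : IsLeast {T : ℕ | ∃ p d, Feasible p d ∧ ∀ r ∈ R', d r ≤ T} dur0)
    (p d : R → ℕ) (hroute : Feasible p d) :
    (R'.filter (fun r => d r < dur0)).card ≤ R'.card - 1 :=
  stmt_9_general Feasible R' dur0 hdur p d hroute
end

section
/- The time-shifted sequencing inequality SEC₂ is valid: let R' be a set of requests with |R'| ≥ 2, i a time instant, and dur(R', i) the minimum time any truck needs to deliver all requests of R' when all pickups start at or after time i (not counting the initial trip to the first pickup location). Then in any valid truck route, the number of requests of R' whose pickup starts at or after i and whose delivery completes strictly before i + dur(R', i) is at most |R'| − 1. -/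
theorem eq_empty_of_forall_mem_delivered_before_dur {R : Type}
    (Feasible : (R → ℕ) → (R → ℕ) → Prop) (R' : Finset R) (i dur : ℕ)
    (hdur : IsLeast {T : ℕ | ∃ p d, Feasible p d ∧ (∀ r ∈ R', i ≤ p r) ∧
      ∀ r ∈ R', d r ≤ i + T} dur)
    (p d : R → ℕ) (hroute : Feasible p d) (hpd : ∀ r ∈ R', p r ≤ d r)
    (hall : ∀ r ∈ R', i ≤ p r ∧ d r < i + dur) :
    R' = ∅ := by
  refine Finset.eq_empty_iff_forall_notMem.mpr fun r₀ hr₀ => ?_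
  have hdur_pos : 0 < dur := by
    have := hall r₀ hr₀
    have := hpd r₀ hr₀
    omega
  have hwitness : dur - 1 ∈ {T : ℕ | ∃ p d, Feasible p d ∧ (∀ r ∈ R', i ≤ p r) ∧
      ∀ r ∈ R', d r ≤ i + T} :=
    ⟨p, d, hroute, fun r hr => (hall r hr).1, fun r hr => by have := (hall r hr).2; omega⟩
  have := hdur.2 hwitness
  omega

theorem stmt_10_general {R : Type}
    (Feasible : (R → ℕ) → (R → ℕ) → Prop)
    (R' : Finset R)
    (i : ℕ) (dur : ℕ)
    (hdur : IsLeast {T : ℕ | ∃ p d, Feasible p d ∧ (∀ r ∈ R', i ≤ p r) ∧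
      ∀ r ∈ R', d r ≤ i + T} dur)
    (p d : R → ℕ) (hroute : Feasible p d) (hpd : ∀ r : R, p r ≤ d r) :
    (R'.filter (fun r => i ≤ p r ∧ d r < i + dur)).card ≤ R'.card - 1 := by
  by_cases hall : ∀ r ∈ R', i ≤ p r ∧ d r < i + dur
  · simp [eq_empty_of_forall_mem_delivered_before_dur Feasible R' i dur hdur p d hroute
      (fun r _ => hpd r) hall]
  · have hne : (R'.filter (fun r => i ≤ p r ∧ d r < i + dur)).card ≠ R'.card :=
      Finset.card_filter_eq_iff.not.mpr hall
    have := Finset.card_filter_le R' (fun r => i ≤ p r ∧ d r < i + dur)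
    omega

/-- The time-shifted sequencing inequality SEC₂ is valid.
Here `Feasible p d` means that the pickup start times `p` and
delivery-completion times `d` arise from a valid truck route (respecting time
windows, service times and inter-location travel times); pickups never finish
after their deliveries (`p r ≤ d r`).  Let `R'` be a set of at least two
requests, `i` a time instant, and `dur = dur(R', i)` the minimum elapsed time
any truck needs to deliver all requests of `R'` when all their pickups start
at or after `i` (not counting the initial trip to the first pickup location),
i.e. the least `T` such that some feasible route picks up every request of
`R'` at or after `i` and completes all their deliveries by `i + T`.  Then in
any valid truck route, the number of requests of `R'` whose pickup starts at
or after `i` and whose delivery completes strictly before `i + dur` is at most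
`|R'| − 1`. -/
theorem stmt_10 {R : Type} [DecidableEq R]
    (Feasible : (R → ℕ) → (R → ℕ) → Prop)
    (R' : Finset R) (hR' : 2 ≤ R'.card)
    (i : ℕ) (dur : ℕ)
    (hdur : IsLeast {T : ℕ | ∃ p d, Feasible p d ∧ (∀ r ∈ R', i ≤ p r) ∧
      ∀ r ∈ R', d r ≤ i + T} dur)
    (p d : R → ℕ) (hroute : Feasible p d) (hpd : ∀ r : R, p r ≤ d r) :
    (R'.filter (fun r => i ≤ p r ∧ d r < i + dur)).card ≤ R'.card - 1 :=
  stmt_10_general Feasible R' i dur hdur p d hroute hpd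
end

section
/- If a 0/1 incidence vector X of a directed source–sink path in G_LT satisfies, for every request r, Σ_{e ∈ E^{P,r}} X_e = Σ_{e ∈ E^{D,r}} X_e (paired services) and Σ_{e ∈ E^{P,r}} X_e ≤ 1 (no repeated services), and additionally satisfies the alternative disordered-services condition that in every prefix the number of delivery arcs of r never exceeds the number of pickup arcs of r, then the path is a valid single-truck route: each served request is picked up exactly once, delivered exactly once, and the pickup precedes the delivery. -/
/-- If a directed source–sink path of `G_LT` (given by its
chained list `P` of arc labels, i.e. the support of a 0/1 incidence vector)
satisfies, for every request `r`, paired services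
(`#pickup arcs of r = #delivery arcs of r`), no repeated services
(`#pickup arcs of r ≤ 1`), and the alternative disordered-services condition
that in every prefix the number of delivery arcs of `r` never exceeds the
number of pickup arcs of `r`, then the path is a valid single-truck route:
every served request is picked up exactly once, delivered exactly once, and
its pickup precedes its delivery along the path. -/
theorem stmt_15 {L R : Type} [DecidableEq L] [DecidableEq R]
    (P : List (TArc L R))
    (hchain : P.Chain' (fun a b => a.endLoc = b.startLoc ∧ a.endTime = b.startTime))
    (hpaired : ∀ r : R, P.countP (TArc.isPickupOf r) = P.countP (TArc.isDeliveryOf r))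
    (hnorep : ∀ r : R, P.countP (TArc.isPickupOf r) ≤ 1)
    (halt : ∀ (r : R) (l₁ l₂ : List (TArc L R)), P = l₁ ++ l₂ →
      l₁.countP (TArc.isDeliveryOf r) ≤ l₁.countP (TArc.isPickupOf r)) :
    ∀ r : R, 1 ≤ P.countP (TArc.isPickupOf r) →
      P.countP (TArc.isPickupOf r) = 1 ∧
      P.countP (TArc.isDeliveryOf r) = 1 ∧
      ∃ (l₁ : List (TArc L R)) (p : TArc L R) (l₂ : List (TArc L R))
        (d : TArc L R) (l₃ : List (TArc L R)),
        P = l₁ ++ p :: l₂ ++ d :: l₃ ∧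
        TArc.isPickupOf r p = true ∧ TArc.isDeliveryOf r d = true := by
  intro r hr
  have hp1 : P.countP (TArc.isPickupOf r) = 1 := le_antisymm (hnorep r) hr
  have hd1 : P.countP (TArc.isDeliveryOf r) = 1 := (hpaired r) ▸ hp1
  refine ⟨hp1, hd1, ?_⟩
  obtain ⟨p, hpP, hp⟩ := List.countP_pos_iff.mp (by omega : 0 < P.countP (TArc.isPickupOf r))
  obtain ⟨l₁, l₂, rfl⟩ := List.append_of_mem hpP
  have hpc : l₁.countP (TArc.isPickupOf r) = 0 ∧ l₂.countP (TArc.isPickupOf r) = 0 := by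
    rw [List.countP_append, List.countP_cons_of_pos hp] at hp1
    omega
  have hpd : TArc.isDeliveryOf r p = false := by
    cases p <;> simp_all [TArc.isPickupOf, TArc.isDeliveryOf]
  have hl1d : l₁.countP (TArc.isDeliveryOf r) = 0 := by
    have := halt r l₁ (p :: l₂) rfl
    omega
  have hl2d : 0 < l₂.countP (TArc.isDeliveryOf r) := by
    rw [List.countP_append, List.countP_cons_of_neg (by simp [hpd])] at hd1
    omega
  obtain ⟨d, hdP, hd⟩ := List.countP_pos_iff.mp hl2d
  obtain ⟨l₂', l₃, rfl⟩ := List.append_of_mem hdP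
  exact ⟨l₁, p, l₂', d, l₃, by simp, hp, hd⟩
end
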